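/- If L is a semisimple multiplicative lattice with 1 compact (i.e., the meet of all maximal elements is 0), then for any b ∈ L the annihilator a(b) = ⋁{l : lb = 0} is a z-element. -/

import Mathlib

/-- A multiplicative lattice: a complete lattice with an associative, commutative
multiplication distributing over arbitrary joins, with the top element as unit. -/
class MultiplicativeLattice (L : Type*) extends CompleteLattice L, CommMonoid L where
  mul_sSup : ∀ (a : L) (s : Set L), a * sSup s = ⨆ b ∈ s, a * b
  one_eq_top : (1 : L) = ⊤

variable {L : Type*} [MultiplicativeLattice L]

/-- A maximal element: proper, and anything properly above it up to (but not) ⊤ equals it. -/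
def IsMaxElt (m : L) : Prop := m ≠ ⊤ ∧ ∀ x : L, m ≤ x → x ≠ ⊤ → m = x

/-- The set of maximal elements above `a`. -/
def MSet (a : L) : Set L := {m | IsMaxElt m ∧ a ≤ m}

/-- A z-element: `M_a ⊇ M_b` and `b ≤ x` imply `a ≤ x`. -/
def IsZ (x : L) : Prop := ∀ a b : L, MSet b ⊆ MSet a → b ≤ x → a ≤ x

/-- The top element 1 = ⊤ is compact. -/
def OneCompact (L : Type*) [MultiplicativeLattice L] : Prop :=
  ∀ s : Set L, sSup s = ⊤ → ∃ t : Finset L, ↑t ⊆ s ∧ t.sup id = ⊤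

/-- The z-closure of an element: meet of all z-elements above it. -/
noncomputable def zCl (a : L) : L := sInf {z : L | IsZ z ∧ a ≤ z}

/-! If `c * b = ⊥` and every maximal element above `c` lies above `a`, then `a * b` lies below
every maximal element `m`: trivially when `b ≤ m`, and otherwise `m ⊔ b = ⊤` gives
`c = c * (m ⊔ b) ≤ m ⊔ c * b = m`, so `a ≤ m`. Semisimplicity then forces `a * b = ⊥`. -/

namespace MultiplicativeLattice

theorem mul_sup (a x y : L) : a * (x ⊔ y) = a * x ⊔ a * y := by
  rw [← sSup_pair, mul_sSup, iSup_pair]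

theorem mul_le_mul_left {x y : L} (a : L) (h : x ≤ y) : a * x ≤ a * y := by
  rw [← sup_eq_right.mpr h, mul_sup]
  exact le_sup_left

theorem mul_le_mul_right {x y : L} (a : L) (h : x ≤ y) : x * a ≤ y * a := by
  simpa only [mul_comm _ a] using mul_le_mul_left a h

theorem mul_top (a : L) : a * ⊤ = a := by
  rw [← one_eq_top, mul_one]

theorem mul_le_left (a b : L) : a * b ≤ a :=
  (mul_le_mul_left a le_top).trans_eq (mul_top a)

theorem mul_le_right (a b : L) : a * b ≤ b :=
  mul_comm a b ▸ mul_le_left b a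

theorem le_sSup_mul_eq_bot_iff {b c : L} : c ≤ sSup {l : L | l * b = ⊥} ↔ c * b = ⊥ := by
  refine ⟨fun hc => eq_bot_iff.mpr ?_, fun hc => le_sSup hc⟩
  calc c * b ≤ sSup {l : L | l * b = ⊥} * b := mul_le_mul_right b hc
    _ = ⊥ := by
      rw [mul_comm, mul_sSup]
      exact iSup₂_eq_bot.mpr fun l hl => mul_comm b l ▸ hl

end MultiplicativeLattice

open MultiplicativeLattice

theorem IsMaxElt.sup_eq_top_of_not_le {m b : L} (hm : IsMaxElt m) (hbm : ¬b ≤ m) : m ⊔ b = ⊤ := by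
  by_contra hne
  exact hbm (le_sup_right.trans (hm.2 _ le_sup_left hne).ge)

theorem IsMaxElt.le_of_mul_le {m b c : L} (hm : IsMaxElt m) (hbm : ¬b ≤ m) (hcb : c * b ≤ m) :
    c ≤ m := by
  calc c = c * (m ⊔ b) := by rw [hm.sup_eq_top_of_not_le hbm, mul_top]
    _ = c * m ⊔ c * b := mul_sup c m b
    _ ≤ m := sup_le (mul_le_right c m) hcb

theorem eq_bot_of_forall_isMaxElt_le (hss : sInf {m : L | IsMaxElt m} = ⊥) {x : L}
    (hx : ∀ m, IsMaxElt m → x ≤ m) : x = ⊥ :=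
  eq_bot_iff.mpr (hss ▸ le_sInf hx)

theorem stmt10_general (hss : sInf {m : L | IsMaxElt m} = ⊥) (b : L) :
    IsZ (sSup {l : L | l * b = ⊥}) := by
  intro a c hsub hc
  rw [le_sSup_mul_eq_bot_iff] at hc ⊢
  refine eq_bot_of_forall_isMaxElt_le hss fun m hm => ?_
  by_cases hbm : b ≤ m
  · exact (mul_le_right a b).trans hbm
  · have hcm : c ≤ m := hm.le_of_mul_le hbm (hc ▸ bot_le)
    exact (mul_le_left a b).trans (hsub ⟨hm, hcm⟩).2

theorem stmt10 (h : OneCompact L) (hss : sInf {m : L | IsMaxElt m} = ⊥) (b : L) :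
    IsZ (sSup {l : L | l * b = ⊥}) :=
  stmt10_general hss b
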